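/- arXiv:1802.03623 — 3 statements merged into one kernel-verified Lean document; each statement's English description precedes it below -/
import Mathlib

section
/- The function φ(d,m) = (d - (2q-1))^2 is a Lyapunov function for the planar vector field b = (b_d, b_m): for all (d,m) with -1 < d < 1 and 0 ≤ m ≤ 1 - d^2, one has ∇φ · b = -2(1-m-d^2)(1+d-2q)^2/((1-d)(1+d)) ≤ 0. -/
theorem stmt_1_general (q d m : ℝ)
    (hd1 : -1 < d) (hd2 : d < 1) (hm1 : m ≤ 1 - d^2) :
    (2 * (d - (2*q - 1))) * (-(1 - m - d^2) * (1 + d - 2*q) / ((1 + d) * (1 - d)))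
      + 0 * (d * m * (1 + d - 2*q) / ((1 + d) * (1 - d)))
      = -2 * (1 - m - d^2) * (1 + d - 2*q)^2 / ((1 - d) * (1 + d)) ∧
    -2 * (1 - m - d^2) * (1 + d - 2*q)^2 / ((1 - d) * (1 + d)) ≤ 0 := by
  refine ⟨by ring, div_nonpos_of_nonpos_of_nonneg ?_ (mul_nonneg (by linarith) (by linarith))⟩
  have hgap : -2 * (1 - m - d^2) ≤ 0 := by linarith
  exact mul_nonpos_of_nonpos_of_nonneg hgap (sq_nonneg _)

/-- φ(d,m) = (d-(2q-1))² is a Lyapunov function: ∇φ·b equals the stated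
expression and is ≤ 0 on the region -1 < d < 1, 0 ≤ m ≤ 1 - d². -/
theorem stmt_1 (q d m : ℝ) (hq : 0 < q) (hq1 : q < 1)
    (hd1 : -1 < d) (hd2 : d < 1) (hm0 : 0 ≤ m) (hm1 : m ≤ 1 - d^2) :
    (2 * (d - (2*q - 1))) * (-(1 - m - d^2) * (1 + d - 2*q) / ((1 + d) * (1 - d)))
      + 0 * (d * m * (1 + d - 2*q) / ((1 + d) * (1 - d)))
      = -2 * (1 - m - d^2) * (1 + d - 2*q)^2 / ((1 - d) * (1 + d)) ∧
    -2 * (1 - m - d^2) * (1 + d - 2*q)^2 / ((1 - d) * (1 + d)) ≤ 0 :=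
  stmt_1_general q d m hd1 hd2 hm1
end

section
/- The quantity C(d,m) = (-1 + 2m + d^2)/m^2 is a first integral of the drift flow: for -1 < d < 1, 0 < m, the directional derivative of C along the vector field (b_d, b_m) vanishes, i.e. (∂C/∂d)·b_d + (∂C/∂m)·b_m = 0, where ∂C/∂d = 2d/m^2 and ∂C/∂m = 2(1-d^2-m)/m^3. -/
theorem grad_firstIntegral_mul_flowDirection_eq_zero {K : Type*} [Field K] {d m : K}
    (hm : m ≠ 0) :
    2 * d / m ^ 2 * (-(1 - m - d ^ 2)) + 2 * (1 - d ^ 2 - m) / m ^ 3 * (d * m) = 0 := by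
  field_simp
  ring

theorem stmt_5_general (q d m : ℝ) (hm : 0 < m) :
    (2*d / m^2) * (-(1 - m - d^2) * (1 + d - 2*q) / ((1 + d) * (1 - d)))
      + (2*(1 - d^2 - m) / m^3) * (d * m * (1 + d - 2*q) / ((1 + d) * (1 - d)))
      = 0 := by
  -- the drift is the scalar `(1 + d - 2q) / (1 - d²)` times `(-(1 - m - d²), d m)`
  linear_combination (1 + d - 2*q) / ((1 + d) * (1 - d)) *
    grad_firstIntegral_mul_flowDirection_eq_zero hm.ne'

/-- C(d,m) = (-1+2m+d²)/m² is a first integral of the drift flow. -/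
theorem stmt_5 (q d m : ℝ) (hq : 0 < q) (hq1 : q < 1)
    (hd1 : -1 < d) (hd2 : d < 1) (hm : 0 < m) :
    (2*d / m^2) * (-(1 - m - d^2) * (1 + d - 2*q) / ((1 + d) * (1 - d)))
      + (2*(1 - d^2 - m) / m^3) * (d * m * (1 + d - 2*q) / ((1 + d) * (1 - d)))
      = 0 :=
  stmt_5_general q d m hm
end

section
/- The projection map to the stable line has zero derivative along the drift: with m*(d,m) = 4q(1-q)/(1 + √(1 - C(d,m)·4q(1-q))) where C(d,m) = (-1+2m+d^2)/m^2, one has (∂m*/∂d)·b_d + (∂m*/∂m)·b_m = 0 for all (d,m) with -1 < d < 1, 0 < m, provided 1 - 4q(1-q)·C(d,m) > 0 and 4q(1-q) ≠ m*(d,m). -/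
/-!
The projection depends on `(d, m)` only through `C(d, m) = (-1 + 2m + d²) / m²`
(`driftInvariant`), and `C` is a first integral of the drift: `∂C/∂d = 2d/m²` and
`∂C/∂m = 2(1 - m - d²)/m³`, so `∇C · b = 0` because `b` is a multiple of `(-(1 - m - d²), d m)`.
By the chain rule the same holds for every function of `C` that is differentiable at `C(d, m)`,
in particular for `m*`.
-/

noncomputable def driftInvariant (d m : ℝ) : ℝ := (-1 + 2*m + d^2) / m^2

theorem hasDerivAt_driftInvariant_left (d m : ℝ) :
    HasDerivAt (driftInvariant · m) (2*d / m^2) d := by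
  have hsq : HasDerivAt (fun x : ℝ => x^2) (2*d) d := by simpa using hasDerivAt_pow 2 d
  exact (hsq.const_add (-1 + 2*m)).div_const (m^2)

theorem hasDerivAt_driftInvariant_right (d : ℝ) {m : ℝ} (hm : m ≠ 0) :
    HasDerivAt (driftInvariant d ·) (2*(1 - m - d^2) / m^3) m := by
  have hnum : HasDerivAt (fun x : ℝ => -1 + 2*x + d^2) 2 m := by
    simpa using (((hasDerivAt_id m).const_mul 2).const_add (-1)).add_const (d^2)
  have hsq : HasDerivAt (fun x : ℝ => x^2) (2*m) m := by simpa using hasDerivAt_pow 2 m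
  refine (hnum.div hsq (pow_ne_zero 2 hm)).congr_deriv ?_
  field_simp
  ring

theorem deriv_comp_driftInvariant_dot_drift_eq_zero {g : ℝ → ℝ} {d m : ℝ}
    (hg : DifferentiableAt ℝ g (driftInvariant d m)) (hm : m ≠ 0) (k : ℝ) :
    deriv (fun x => g (driftInvariant x m)) d * (-(1 - m - d^2) * k)
      + deriv (fun x => g (driftInvariant d x)) m * (d * m * k) = 0 := by
  have hleft : HasDerivAt (fun x => g (driftInvariant x m)) _ d :=
    hg.hasDerivAt.comp d (hasDerivAt_driftInvariant_left d m)
  have hright : HasDerivAt (fun x => g (driftInvariant d x)) _ m :=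
    hg.hasDerivAt.comp m (hasDerivAt_driftInvariant_right d hm)
  rw [hleft.deriv, hright.deriv]
  field_simp
  ring

theorem differentiableAt_div_one_add_sqrt_one_sub_mul {A c : ℝ} (h : 0 < 1 - A * c) :
    DifferentiableAt ℝ (fun c => A / (1 + Real.sqrt (1 - A * c))) c := by
  have hsqrt : DifferentiableAt ℝ (fun c => Real.sqrt (1 - A * c)) c :=
    ((differentiableAt_const 1).sub ((differentiableAt_id).const_mul A)).sqrt h.ne'
  exact (differentiableAt_const A).div ((differentiableAt_const 1).add hsqrt)
    (by positivity)

theorem stmt_6_general (q d m : ℝ) (hm : 0 < m)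
    (hpos : 1 - 4*q*(1-q) * ((-1 + 2*m + d^2) / m^2) > 0) :
    deriv (fun x : ℝ =>
        4*q*(1-q) / (1 + Real.sqrt (1 - 4*q*(1-q) * ((-1 + 2*m + x^2) / m^2)))) d
      * (-(1 - m - d^2) * (1 + d - 2*q) / ((1 + d) * (1 - d)))
    + deriv (fun x : ℝ =>
        4*q*(1-q) / (1 + Real.sqrt (1 - 4*q*(1-q) * ((-1 + 2*x + d^2) / x^2)))) m
      * (d * m * (1 + d - 2*q) / ((1 + d) * (1 - d)))
    = 0 := by
  have h := deriv_comp_driftInvariant_dot_drift_eq_zero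
    (differentiableAt_div_one_add_sqrt_one_sub_mul hpos) hm.ne' ((1 + d - 2*q) / ((1 + d) * (1 - d)))
  rwa [← mul_div_assoc (-(1 - m - d^2)), ← mul_div_assoc (d * m)] at h

/-- The projection m* onto the stable line has zero derivative along the drift. -/
theorem stmt_6 (q d m : ℝ) (hq : 0 < q) (hq1 : q < 1)
    (hd1 : -1 < d) (hd2 : d < 1) (hm : 0 < m)
    (hpos : 1 - 4*q*(1-q) * ((-1 + 2*m + d^2) / m^2) > 0)
    (hne : 4*q*(1-q) ≠
      4*q*(1-q) / (1 + Real.sqrt (1 - 4*q*(1-q) * ((-1 + 2*m + d^2) / m^2)))) :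
    deriv (fun x : ℝ =>
        4*q*(1-q) / (1 + Real.sqrt (1 - 4*q*(1-q) * ((-1 + 2*m + x^2) / m^2)))) d
      * (-(1 - m - d^2) * (1 + d - 2*q) / ((1 + d) * (1 - d)))
    + deriv (fun x : ℝ =>
        4*q*(1-q) / (1 + Real.sqrt (1 - 4*q*(1-q) * ((-1 + 2*x + d^2) / x^2)))) m
      * (d * m * (1 + d - 2*q) / ((1 + d) * (1 - d)))
    = 0 :=
  stmt_6_general q d m hm hpos
end
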